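/- arXiv:2108.00593 — 5 statements merged into one kernel-verified Lean document; each statement's English description precedes it below -/
import Mathlib

section
/- For J-periodic real sequences V and W (V_{i+J} = V_i, W_{i+J} = W_i), defining φ(V,W)_i = (V_{i-1} + V_i + V_{i+1})(W_{i+1} − W_{i-1}) and the inner product (V,W)_h = h·∑_{i=1}^J V_i W_i, one has (φ(V,W), W)_h = −h·∑_{i=1}^J (V_{i+1} − V_{i-2})·W_i·W_{i-1}. -/
lemma shift_sum (J : ℕ) (g : ℤ → ℝ) (hg : ∀ i : ℤ, g (i + J) = g i) :
    ∑ i ∈ Finset.range J, g ((i : ℤ) + 1) = ∑ i ∈ Finset.range J, g (i : ℤ) := by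
  cases J with
  | zero => simp
  | succ n =>
    rw [Finset.sum_range_succ, Finset.sum_range_succ']
    have h1 : g ((n : ℤ) + 1) = g 0 := by
      have := hg 0
      push_cast at this ⊢
      simpa using this
    rw [h1]
    congr 1

theorem stmt_2 (J : ℕ) (hJ : 1 ≤ J) (h : ℝ) (hh : 0 < h)
    (V W : ℤ → ℝ) (hV : ∀ i : ℤ, V (i + J) = V i) (hW : ∀ i : ℤ, W (i + J) = W i) :
    h * ∑ i ∈ Finset.range J,
        ((V ((i : ℤ) - 1) + V (i : ℤ) + V ((i : ℤ) + 1)) * (W ((i : ℤ) + 1) - W ((i : ℤ) - 1))) * W (i : ℤ)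
      = -(h * ∑ i ∈ Finset.range J,
          (V ((i : ℤ) + 1) - V ((i : ℤ) - 2)) * W (i : ℤ) * W ((i : ℤ) - 1)) := by
  set g : ℤ → ℝ := fun i => (V (i - 2) + V (i - 1) + V i) * W i * W (i - 1) with hgdef
  have hg : ∀ i : ℤ, g (i + J) = g i := by
    intro i
    simp only [hgdef]
    have e1 : i + (J : ℤ) - 2 = (i - 2) + J := by ring
    have e2 : i + (J : ℤ) - 1 = (i - 1) + J := by ring
    rw [e1, e2, hV, hV, hV, hW, hW]
  have key : ∑ i ∈ Finset.range J,
      ((V ((i : ℤ) - 1) + V (i : ℤ) + V ((i : ℤ) + 1)) * (W ((i : ℤ) + 1) - W ((i : ℤ) - 1))) * W (i : ℤ)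
      = ∑ i ∈ Finset.range J,
        (g ((i : ℤ) + 1) - (V ((i : ℤ) - 1) + V (i : ℤ) + V ((i : ℤ) + 1)) * W ((i : ℤ) - 1) * W (i : ℤ)) := by
    apply Finset.sum_congr rfl
    intro i _
    simp only [hgdef]
    have e1 : (i : ℤ) + 1 - 2 = (i : ℤ) - 1 := by ring
    have e2 : (i : ℤ) + 1 - 1 = (i : ℤ) := by ring
    rw [e1, e2]
    ring
  rw [key, Finset.sum_sub_distrib, shift_sum J g hg, ← Finset.sum_sub_distrib, ← mul_neg]
  congr 1
  rw [← Finset.sum_neg_distrib]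
  apply Finset.sum_congr rfl
  intro i _
  simp only [hgdef]
  ring
end

section
/- For a J-periodic real sequence V, defining φ(V,V)_i = (V_{i-1} + V_i + V_{i+1})(V_{i+1} − V_{i-1}), the discrete inner product (φ(V,V), V)_h = h·∑_{i=1}^J φ(V,V)_i·V_i equals 0. -/
theorem stmt_3 (J : ℕ) (hJ : 1 ≤ J) (h : ℝ) (hh : 0 < h)
    (V : ℤ → ℝ) (hV : ∀ i : ℤ, V (i + J) = V i) :
    h * ∑ i ∈ Finset.range J,
        ((V ((i : ℤ) - 1) + V (i : ℤ) + V ((i : ℤ) + 1)) * (V ((i : ℤ) + 1) - V ((i : ℤ) - 1))) * V (i : ℤ)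
      = 0 := by
  set g : ℤ → ℝ := fun i => V i * V (i + 1) * (V i + V (i + 1)) with hg
  have key : ∀ i : ℤ,
      (V (i - 1) + V i + V (i + 1)) * (V (i + 1) - V (i - 1)) * V i = g i - g (i - 1) := by
    intro i
    have e : i - 1 + 1 = i := by ring
    simp only [hg, e]
    ring
  set f : ℕ → ℝ := fun n => g ((n : ℤ) - 1) with hf
  have keyn : ∀ n : ℕ, (V ((n : ℤ) - 1) + V (n : ℤ) + V ((n : ℤ) + 1)) *
      (V ((n : ℤ) + 1) - V ((n : ℤ) - 1)) * V (n : ℤ) = f (n + 1) - f n := by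
    intro n
    have e : ((n + 1 : ℕ) : ℤ) - 1 = (n : ℤ) := by push_cast; ring
    simp only [hf, e]
    exact key n
  rw [Finset.sum_congr rfl fun n _ => keyn n, Finset.sum_range_sub]
  have hper : f J = f 0 := by
    simp only [hf]
    have : ((J : ℤ) - 1) = (-1 : ℤ) + J := by ring
    rw [this]
    simp only [hg]
    have e1 : (-1 : ℤ) + J + 1 = 0 + J := by ring
    rw [hV (-1), e1, hV 0]
    norm_num
  rw [hper, sub_self, mul_zero]
end

section
/- For any J-periodic sequence V, the discrete interpolation inequality |V|_{1,h}² ≤ ‖V‖_h · |V|_{2,h} holds, where ‖V‖_h² = h·∑_{i=1}^J V_i², |V|_{1,h}² = h·∑_{i=1}^J ((V_i − V_{i-1})/h)², and |V|_{2,h}² = h·∑_{i=1}^J (Δ_h V_i)² with Δ_h V_i = (V_{i-1} − 2V_i + V_{i+1})/h². -/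
theorem stmt_9 (J : ℕ) (hJ : 1 ≤ J) (h : ℝ) (hh : 0 < h)
    (V : ℤ → ℝ) (hV : ∀ i : ℤ, V (i + J) = V i) :
    h * ∑ i ∈ Finset.range J, ((V (i : ℤ) - V ((i : ℤ) - 1)) / h) ^ 2
      ≤ Real.sqrt (h * ∑ i ∈ Finset.range J, V (i : ℤ) ^ 2) *
        Real.sqrt (h * ∑ i ∈ Finset.range J,
          ((V ((i : ℤ) - 1) - 2 * V (i : ℤ) + V ((i : ℤ) + 1)) / h ^ 2) ^ 2) := by
  -- shift lemma for periodic functions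
  have shift : ∀ f : ℤ → ℝ, (∀ i : ℤ, f (i + J) = f i) →
      ∑ i ∈ Finset.range J, f ((i : ℤ) + 1) = ∑ i ∈ Finset.range J, f (i : ℤ) := by
    intro f hf
    obtain ⟨n, rfl⟩ : ∃ n, J = n + 1 := ⟨J - 1, by omega⟩
    rw [Finset.sum_range_succ, Finset.sum_range_succ']
    have h0 : f ((n : ℤ) + 1) = f 0 := by
      have := hf 0
      push_cast at this ⊢
      simpa using this
    push_cast
    rw [h0]
  -- telescoping identity
  have hgp : ∀ i : ℤ, (fun i : ℤ => V (i - 1) * V i - V (i - 1) ^ 2) (i + (J : ℤ))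
      = (fun i : ℤ => V (i - 1) * V i - V (i - 1) ^ 2) i := by
    intro i
    have h1 : V (i + (J : ℤ) - 1) = V (i - 1) := by
      have := hV (i - 1); rw [show i - 1 + (J : ℤ) = i + (J : ℤ) - 1 by ring] at this
      exact this
    simp only [h1, hV i]
  have tele : ∑ i ∈ Finset.range J,
      (V ((i : ℤ) + 1 - 1) * V ((i : ℤ) + 1) - V ((i : ℤ) + 1 - 1) ^ 2
        - (V ((i : ℤ) - 1) * V (i : ℤ) - V ((i : ℤ) - 1) ^ 2)) = 0 := by
    rw [Finset.sum_sub_distrib,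
      show (∑ i ∈ Finset.range J,
          (V ((i : ℤ) + 1 - 1) * V ((i : ℤ) + 1) - V ((i : ℤ) + 1 - 1) ^ 2))
        = ∑ i ∈ Finset.range J, (V ((i : ℤ) - 1) * V (i : ℤ) - V ((i : ℤ) - 1) ^ 2) from
        shift (fun i : ℤ => V (i - 1) * V i - V (i - 1) ^ 2) hgp, sub_self]
  have key : ∑ i ∈ Finset.range J, (V (i : ℤ) - V ((i : ℤ) - 1)) ^ 2
      = ∑ i ∈ Finset.range J,
          V (i : ℤ) * -(V ((i : ℤ) - 1) - 2 * V (i : ℤ) + V ((i : ℤ) + 1)) := by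
    rw [← sub_eq_zero, ← Finset.sum_sub_distrib, ← tele]
    refine Finset.sum_congr rfl fun i _ => ?_
    have e : (i : ℤ) + 1 - 1 = (i : ℤ) := by ring
    simp only [e]
    ring
  set A := ∑ i ∈ Finset.range J, V (i : ℤ) ^ 2 with hA
  set B := ∑ i ∈ Finset.range J,
      (V ((i : ℤ) - 1) - 2 * V (i : ℤ) + V ((i : ℤ) + 1)) ^ 2 with hB
  set C := ∑ i ∈ Finset.range J, (V (i : ℤ) - V ((i : ℤ) - 1)) ^ 2 with hC
  have hA0 : 0 ≤ A := Finset.sum_nonneg fun i _ => sq_nonneg _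
  have hB0 : 0 ≤ B := Finset.sum_nonneg fun i _ => sq_nonneg _
  have hC0 : 0 ≤ C := Finset.sum_nonneg fun i _ => sq_nonneg _
  -- Cauchy-Schwarz
  have cs : C ^ 2 ≤ A * B := by
    rw [key]
    calc (∑ i ∈ Finset.range J,
          V (i : ℤ) * -(V ((i : ℤ) - 1) - 2 * V (i : ℤ) + V ((i : ℤ) + 1))) ^ 2
        ≤ (∑ i ∈ Finset.range J, V (i : ℤ) ^ 2) *
          ∑ i ∈ Finset.range J,
            (-(V ((i : ℤ) - 1) - 2 * V (i : ℤ) + V ((i : ℤ) + 1))) ^ 2 :=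
          Finset.sum_mul_sq_le_sq_mul_sq _ _ _
      _ = A * B := by rw [hA, hB]; congr 1; exact Finset.sum_congr rfl fun i _ => by ring
  -- rewrite both sides
  have lhs_eq : h * ∑ i ∈ Finset.range J, ((V (i : ℤ) - V ((i : ℤ) - 1)) / h) ^ 2
      = C / h := by
    rw [hC, Finset.mul_sum, Finset.sum_div]
    refine Finset.sum_congr rfl fun i _ => ?_
    field_simp
  have rhs_sum : (∑ i ∈ Finset.range J,
      ((V ((i : ℤ) - 1) - 2 * V (i : ℤ) + V ((i : ℤ) + 1)) / h ^ 2) ^ 2) = B / h ^ 4 := by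
    rw [hB, Finset.sum_div]
    refine Finset.sum_congr rfl fun i _ => ?_
    rw [div_pow]
    congr 1
    ring
  rw [lhs_eq, rhs_sum, ← Real.sqrt_mul (by positivity)]
  rw [Real.le_sqrt (by positivity) (by positivity)]
  have : h * A * (h * (B / h ^ 4)) = A * B / h ^ 2 := by field_simp
  rw [this, div_pow]
  gcongr
end

section
/- For any J-periodic sequence V and any η > 0, the inequality |V|_{1,h}² ≤ η·|V|_{2,h}² + (1/(4η))·‖V‖_h² holds. -/
open Finset

lemma sum_shift_aux (J : ℕ) (f : ℤ → ℝ) (hf : ∀ i : ℤ, f (i + J) = f i) :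
    ∑ i ∈ Finset.range J, f ((i : ℤ) + 1) = ∑ i ∈ Finset.range J, f i := by
  have h1 := Finset.sum_range_succ' (fun n : ℕ => f n) J
  have h2 := Finset.sum_range_succ (fun n : ℕ => f n) J
  have h3 : f (J : ℤ) = f 0 := by simpa using hf 0
  have h4 : ∑ i ∈ Finset.range J, f ((i : ℤ) + 1)
      = ∑ i ∈ Finset.range J, (fun n : ℕ => f n) (i + 1) := by
    apply Finset.sum_congr rfl; intro i _; push_cast; ring_nf
  rw [h4]
  push_cast at h1 h2
  linarith

lemma sum_shift_aux' (J : ℕ) (f : ℤ → ℝ) (hf : ∀ i : ℤ, f (i + J) = f i) :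
    ∑ i ∈ Finset.range J, f ((i : ℤ) - 1) = ∑ i ∈ Finset.range J, f i := by
  have := sum_shift_aux J (fun i => f (i - 1)) (by intro i; show f (i + (J:ℤ) - 1) = f (i - 1); rw [show i + (J:ℤ) - 1 = (i-1) + J by ring, hf])
  simp only [add_sub_cancel_right] at this
  linarith

theorem stmt_10 (J : ℕ) (hJ : 1 ≤ J) (h η : ℝ) (hh : 0 < h) (hη : 0 < η)
    (V : ℤ → ℝ) (hV : ∀ i : ℤ, V (i + J) = V i) :
    h * ∑ i ∈ Finset.range J, ((V (i : ℤ) - V ((i : ℤ) - 1)) / h) ^ 2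
      ≤ η * (h * ∑ i ∈ Finset.range J,
          ((V ((i : ℤ) - 1) - 2 * V (i : ℤ) + V ((i : ℤ) + 1)) / h ^ 2) ^ 2)
        + (1 / (4 * η)) * (h * ∑ i ∈ Finset.range J, V (i : ℤ) ^ 2) := by
  -- shift lemmas
  have shiftsq : ∑ i ∈ Finset.range J, (V ((i:ℤ) - 1))^2 = ∑ i ∈ Finset.range J, (V (i:ℤ))^2 :=
    sum_shift_aux' J (fun i => (V i)^2) (by intro i; show (V (i+J))^2 = (V i)^2; rw [hV])
  have shiftcr : ∑ i ∈ Finset.range J, V (i:ℤ) * V ((i:ℤ) + 1)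
      = ∑ i ∈ Finset.range J, V ((i:ℤ) - 1) * V (i:ℤ) := by
    have := sum_shift_aux J (fun i => V (i - 1) * V i)
      (by intro i; show V (i + (J:ℤ) - 1) * V (i + (J:ℤ)) = V (i - 1) * V i; rw [show i + (J:ℤ) - 1 = (i-1)+J by ring, hV, hV])
    simpa using this
  -- summation by parts identity
  have key : ∑ i ∈ Finset.range J,
      ((V (i:ℤ) - V ((i:ℤ) - 1))^2
        + V (i:ℤ) * (V ((i:ℤ) - 1) - 2 * V (i:ℤ) + V ((i:ℤ) + 1))) = 0 := by
    have e : ∑ i ∈ Finset.range J,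
        ((V (i:ℤ) - V ((i:ℤ) - 1))^2
          + V (i:ℤ) * (V ((i:ℤ) - 1) - 2 * V (i:ℤ) + V ((i:ℤ) + 1)))
        = (∑ i ∈ Finset.range J, ((V ((i:ℤ) - 1))^2 - (V (i:ℤ))^2))
          + (∑ i ∈ Finset.range J, (V (i:ℤ) * V ((i:ℤ) + 1) - V ((i:ℤ) - 1) * V (i:ℤ))) := by
      rw [← Finset.sum_add_distrib]
      apply Finset.sum_congr rfl; intro i _; ring
    rw [e, Finset.sum_sub_distrib, Finset.sum_sub_distrib, shiftsq, shiftcr]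
    ring
  have idt : ∑ i ∈ Finset.range J, (V (i:ℤ) - V ((i:ℤ) - 1))^2
      = ∑ i ∈ Finset.range J, (-(V (i:ℤ) * (V ((i:ℤ) - 1) - 2 * V (i:ℤ) + V ((i:ℤ) + 1)))) := by
    rw [Finset.sum_add_distrib] at key
    rw [Finset.sum_neg_distrib]
    linarith
  -- rewrite LHS
  have lhs_eq : h * ∑ i ∈ Finset.range J, ((V (i : ℤ) - V ((i : ℤ) - 1)) / h) ^ 2
      = ∑ i ∈ Finset.range J,
        (-(V (i:ℤ) * (V ((i:ℤ) - 1) - 2 * V (i:ℤ) + V ((i:ℤ) + 1))) / h) := by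
    have l1 : h * ∑ i ∈ Finset.range J, ((V (i : ℤ) - V ((i : ℤ) - 1)) / h) ^ 2
        = ∑ i ∈ Finset.range J, (V (i:ℤ) - V ((i:ℤ) - 1))^2 / h := by
      rw [Finset.mul_sum]
      apply Finset.sum_congr rfl; intro i _; field_simp
    rw [l1, ← Finset.sum_div, idt, Finset.sum_div]
  have rhs_eq : η * (h * ∑ i ∈ Finset.range J,
          ((V ((i : ℤ) - 1) - 2 * V (i : ℤ) + V ((i : ℤ) + 1)) / h ^ 2) ^ 2)
        + (1 / (4 * η)) * (h * ∑ i ∈ Finset.range J, V (i : ℤ) ^ 2)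
      = ∑ i ∈ Finset.range J,
        (η * ((V ((i:ℤ) - 1) - 2 * V (i:ℤ) + V ((i:ℤ) + 1)) / h ^ 2) ^ 2 * h
          + (1 / (4 * η)) * (V (i:ℤ))^2 * h) := by
    simp only [Finset.mul_sum]
    rw [← Finset.sum_add_distrib]
    apply Finset.sum_congr rfl; intro i _; ring
  rw [lhs_eq, rhs_eq]
  apply Finset.sum_le_sum
  intro i _
  set a := V ((i:ℤ) - 1) - 2 * V (i:ℤ) + V ((i:ℤ) + 1) with ha
  set v := V (i:ℤ) with hv
  have h2 : (0:ℝ) < h^2 := by positivity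
  rw [div_le_iff₀ hh]
  have expand : (η * (a / h ^ 2) ^ 2 * h + 1 / (4 * η) * v ^ 2 * h) * h
      = η * a^2 / h^2 + h^2 * v^2 / (4*η) := by field_simp
  rw [expand]
  have sqid : η * a^2 / h^2 + h^2 * v^2 / (4*η) + v*a
      = (2*η*a + h^2*v)^2 / (4*η*h^2) := by field_simp; ring
  have nn : (0:ℝ) ≤ (2*η*a + h^2*v)^2 / (4*η*h^2) :=
    div_nonneg (sq_nonneg _) (by positivity)
  linarith
end

section
/- Let δ > 0, α > 1, and for an integer m with |m| ≥ 2 define λ_m(R) = −δm⁴/R⁴ + (m²/R²)(α − 1 + δ/R²) − (α−1)/R². Then λ_m(R) = 0 if and only if δ = ((α−1)/m²)·R². Moreover, λ_m(R) < 0 for all |m| ≥ 2 whenever 0 < R < 2√(δ/(α−1)). -/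
theorem stmt_16 (δ α R : ℝ) (m : ℤ) (hδ : 0 < δ) (hα : 1 < α) (hR : 0 < R)
    (hm : 2 ≤ |m|) :
    (-δ * (m : ℝ) ^ 4 / R ^ 4 + ((m : ℝ) ^ 2 / R ^ 2) * (α - 1 + δ / R ^ 2)
        - (α - 1) / R ^ 2 = 0
      ↔ δ = ((α - 1) / (m : ℝ) ^ 2) * R ^ 2)
    ∧ (R < 2 * Real.sqrt (δ / (α - 1)) →
        -δ * (m : ℝ) ^ 4 / R ^ 4 + ((m : ℝ) ^ 2 / R ^ 2) * (α - 1 + δ / R ^ 2)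
          - (α - 1) / R ^ 2 < 0) := by
  have hm2 : (4 : ℝ) ≤ (m : ℝ) ^ 2 := by
    have : (2 : ℝ) ≤ |(m : ℝ)| := by exact_mod_cast (by simpa using hm)
    nlinarith [abs_nonneg (m : ℝ), sq_abs (m : ℝ)]
  have hmpos : (0 : ℝ) < (m : ℝ) ^ 2 := by linarith
  have hR2 : (0 : ℝ) < R ^ 2 := by positivity
  have hR4 : (0 : ℝ) < R ^ 4 := by positivity
  have hfac : -δ * (m : ℝ) ^ 4 / R ^ 4 + ((m : ℝ) ^ 2 / R ^ 2) * (α - 1 + δ / R ^ 2)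
      - (α - 1) / R ^ 2
      = (((m : ℝ) ^ 2 - 1) / R ^ 4) * ((α - 1) * R ^ 2 - δ * (m : ℝ) ^ 2) := by
    field_simp
    ring
  constructor
  · rw [hfac]
    constructor
    · intro h
      have h2 : (α - 1) * R ^ 2 - δ * (m : ℝ) ^ 2 = 0 := by
        rcases mul_eq_zero.mp h with h' | h'
        · exfalso
          have : ((m : ℝ) ^ 2 - 1) / R ^ 4 ≠ 0 := by
            apply div_ne_zero <;> nlinarith
          exact this h'
        · exact h'
      field_simp
      rw [eq_div_iff (ne_of_gt hmpos)]
      linarith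
    · intro h
      rw [h]
      field_simp
      rw [div_self (by intro h0; rw [h0] at hmpos; norm_num at hmpos)]
      ring
  · intro hRlt
    rw [hfac]
    have hα1 : (0 : ℝ) < α - 1 := by linarith
    have hsq : R ^ 2 < 4 * (δ / (α - 1)) := by
      have h2 : (2 : ℝ) * Real.sqrt (δ / (α - 1)) = Real.sqrt (4 * (δ / (α - 1))) := by
        rw [show (4 : ℝ) * (δ / (α - 1)) = 2 ^ 2 * (δ / (α - 1)) by ring,
          Real.sqrt_mul (by positivity), Real.sqrt_sq (by norm_num)]
      have := Real.sq_sqrt (show (0:ℝ) ≤ 4 * (δ / (α - 1)) by positivity)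
      nlinarith [Real.sqrt_nonneg (4 * (δ / (α - 1))), hRlt, h2]
    have hkey : (α - 1) * R ^ 2 - δ * (m : ℝ) ^ 2 < 0 := by
      have : (α - 1) * R ^ 2 < 4 * δ := by
        have := (mul_lt_mul_iff_right₀ hα1).mpr hsq
        calc (α - 1) * R ^ 2 < (α - 1) * (4 * (δ / (α - 1))) := this
          _ = 4 * δ := by field_simp
      nlinarith
    apply mul_neg_of_pos_of_neg
    · apply div_pos <;> nlinarith
    · exact hkey
end
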